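/- Let D ⊆ ℝ² be open and let μ be a real number with μ ≠ 0 and μ ≠ 1. Let F, G : D → SU(2) and u₀, v₀, p₁, p₂, q₁, q₂ : D → ℝ be smooth, set B₁ = p₁·e₁ + p₂·e₂ and B₋₁ = q₁·e₁ + q₂·e₂, and assume F⁻¹·∂ᵤF = u₀·e₃ + B₁, F⁻¹·∂ᵥF = v₀·e₃ + B₋₁, G⁻¹·∂ᵤG = u₀·e₃ + μ·B₁ and G⁻¹·∂ᵥG = v₀·e₃ + μ⁻¹·B₋₁ on D. Then the map f = G·F⁻¹ satisfies f⁻¹·∂ᵤf = (μ-1)·F·B₁·F⁻¹ and f⁻¹·∂ᵥf = (μ⁻¹-1)·F·B₋₁·F⁻¹ on D. In particular, at every point p where B₁(p) and B₋₁(p) are linearly independent over ℝ, the partial derivatives ∂ᵤf(p) and ∂ᵥf(p) are linearly independent, so f is an immersion at p. -/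

import Mathlib

open Matrix

attribute [local instance] Matrix.frobeniusNormedAddCommGroup Matrix.frobeniusNormedSpace

noncomputable section

/-- Basis of su(2). -/
def e1 : Matrix (Fin 2) (Fin 2) ℂ := !![0, 1; -1, 0]
def e2 : Matrix (Fin 2) (Fin 2) ℂ := !![0, Complex.I; Complex.I, 0]
def e3 : Matrix (Fin 2) (Fin 2) ℂ := !![Complex.I, 0; 0, -Complex.I]

def xi1 (θ : ℝ) : Matrix (Fin 2) (Fin 2) ℂ := Real.cos θ • e1 - Real.sin θ • e2
def xi2 (θ : ℝ) : Matrix (Fin 2) (Fin 2) ℂ := Real.cos θ • e1 + Real.sin θ • e2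

/-- Partial derivative in the `u` direction. -/
def pu {E : Type*} [NormedAddCommGroup E] [NormedSpace ℝ E]
    (f : ℝ × ℝ → E) (p : ℝ × ℝ) : E := fderiv ℝ f p (1, 0)

/-- Partial derivative in the `v` direction. -/
def pv {E : Type*} [NormedAddCommGroup E] [NormedSpace ℝ E]
    (f : ℝ × ℝ → E) (p : ℝ × ℝ) : E := fderiv ℝ f p (0, 1)

/-- The normal Gauss map `ν = F·e₃·F⁻¹`. -/
def nu (F : ℝ × ℝ → Matrix (Fin 2) (Fin 2) ℂ) (p : ℝ × ℝ) : Matrix (Fin 2) (Fin 2) ℂ :=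
  F p * e3 * (F p)⁻¹

attribute [local instance] Matrix.frobeniusNormedRing Matrix.frobeniusNormedAlgebra

private abbrev M2 := Matrix (Fin 2) (Fin 2) ℂ

private lemma alg_aux (a b ai bi X Y : M2) (h : bi * b = 1) :
    a * bi * (b * -(ai * X * ai) + Y * ai) = a * (bi * Y - ai * X) * ai := by
  have e : a * bi * (b * -(ai * X * ai) + Y * ai)
      = a * bi * b * -(ai * X * ai) + a * (bi * Y) * ai := by noncomm_ring
  rw [e, mul_assoc a bi b, h, mul_one]
  noncomm_ring

private lemma key (F G : ℝ × ℝ → M2) (p : ℝ × ℝ) (w : ℝ × ℝ)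
    (hFd : DifferentiableAt ℝ F p) (hGd : DifferentiableAt ℝ G p)
    (hFu : IsUnit (F p).det) (hGu : IsUnit (G p).det) :
    (G p * (F p)⁻¹)⁻¹ * fderiv ℝ (fun q => G q * (F q)⁻¹) p w
      = F p * ((G p)⁻¹ * fderiv ℝ G p w - (F p)⁻¹ * fderiv ℝ F p w) * (F p)⁻¹ := by
  have hFunit : IsUnit (F p) := (Matrix.isUnit_iff_isUnit_det _).mpr hFu
  have hinv : HasFDerivAt (fun q => (F q)⁻¹)
      ((-(ContinuousLinearMap.mulLeftRight ℝ M2 (F p)⁻¹ (F p)⁻¹)).comp (fderiv ℝ F p)) p := by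
    have h1 := (hasFDerivAt_ringInverse (𝕜 := ℝ) hFunit.unit).comp p hFd.hasFDerivAt
    simp only [Function.comp_def, ← Matrix.nonsing_inv_eq_ringInverse,
      Matrix.coe_units_inv, IsUnit.unit_spec] at h1
    exact h1
  have hmul := hGd.hasFDerivAt.mul' hinv
  have hw := congrArg (fun L : (ℝ × ℝ) →L[ℝ] M2 => L w) hmul.fderiv
  replace hw : fderiv ℝ (fun q => G q * (F q)⁻¹) p w
      = G p * -((F p)⁻¹ * fderiv ℝ F p w * (F p)⁻¹) + fderiv ℝ G p w * (F p)⁻¹ := hw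
  rw [hw, Matrix.mul_inv_rev, Matrix.nonsing_inv_nonsing_inv _ hFu]
  exact alg_aux _ _ _ _ _ _ (Matrix.nonsing_inv_mul _ hGu)

theorem projection_immersion
    (D : Set (ℝ × ℝ)) (hD : IsOpen D) (μ : ℝ) (hμ0 : μ ≠ 0) (hμ1 : μ ≠ 1)
    (F G : ℝ × ℝ → Matrix (Fin 2) (Fin 2) ℂ) (u0 v0 p1 p2 q1 q2 : ℝ × ℝ → ℝ)
    (hF : ContDiffOn ℝ (⊤ : ℕ∞) F D) (hG : ContDiffOn ℝ (⊤ : ℕ∞) G D)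
    (hu0 : ContDiffOn ℝ (⊤ : ℕ∞) u0 D) (hv0 : ContDiffOn ℝ (⊤ : ℕ∞) v0 D)
    (hp1 : ContDiffOn ℝ (⊤ : ℕ∞) p1 D) (hp2 : ContDiffOn ℝ (⊤ : ℕ∞) p2 D)
    (hq1 : ContDiffOn ℝ (⊤ : ℕ∞) q1 D) (hq2 : ContDiffOn ℝ (⊤ : ℕ∞) q2 D)
    (hFSU : ∀ p ∈ D, F p ∈ Matrix.specialUnitaryGroup (Fin 2) ℂ)
    (hGSU : ∀ p ∈ D, G p ∈ Matrix.specialUnitaryGroup (Fin 2) ℂ)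
    (hFu : ∀ p ∈ D, (F p)⁻¹ * pu F p = u0 p • e3 + (p1 p • e1 + p2 p • e2))
    (hFv : ∀ p ∈ D, (F p)⁻¹ * pv F p = v0 p • e3 + (q1 p • e1 + q2 p • e2))
    (hGu : ∀ p ∈ D, (G p)⁻¹ * pu G p = u0 p • e3 + μ • (p1 p • e1 + p2 p • e2))
    (hGv : ∀ p ∈ D, (G p)⁻¹ * pv G p = v0 p • e3 + μ⁻¹ • (q1 p • e1 + q2 p • e2)) :
    (∀ p ∈ D, (G p * (F p)⁻¹)⁻¹ * pu (fun q => G q * (F q)⁻¹) p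
        = (μ - 1) • (F p * (p1 p • e1 + p2 p • e2) * (F p)⁻¹))
    ∧ (∀ p ∈ D, (G p * (F p)⁻¹)⁻¹ * pv (fun q => G q * (F q)⁻¹) p
        = (μ⁻¹ - 1) • (F p * (q1 p • e1 + q2 p • e2) * (F p)⁻¹))
    ∧ (∀ p ∈ D, LinearIndependent ℝ ![p1 p • e1 + p2 p • e2, q1 p • e1 + q2 p • e2] →
        LinearIndependent ℝ ![pu (fun q => G q * (F q)⁻¹) p, pv (fun q => G q * (F q)⁻¹) p]) := by
  have hFdet : ∀ p ∈ D, (F p).det = 1 :=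
    fun p hp => ((Matrix.mem_specialUnitaryGroup_iff).mp (hFSU p hp)).2
  have hGdet : ∀ p ∈ D, (G p).det = 1 :=
    fun p hp => ((Matrix.mem_specialUnitaryGroup_iff).mp (hGSU p hp)).2
  have hFud : ∀ p ∈ D, IsUnit (F p).det := fun p hp => by rw [hFdet p hp]; exact isUnit_one
  have hGud : ∀ p ∈ D, IsUnit (G p).det := fun p hp => by rw [hGdet p hp]; exact isUnit_one
  have hFd : ∀ p ∈ D, DifferentiableAt ℝ F p :=
    fun p hp => (hF.contDiffAt (hD.mem_nhds hp)).differentiableAt (by simp)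
  have hGd : ∀ p ∈ D, DifferentiableAt ℝ G p :=
    fun p hp => (hG.contDiffAt (hD.mem_nhds hp)).differentiableAt (by simp)
  have part1 : ∀ p ∈ D, (G p * (F p)⁻¹)⁻¹ * pu (fun q => G q * (F q)⁻¹) p
      = (μ - 1) • (F p * (p1 p • e1 + p2 p • e2) * (F p)⁻¹) := by
    intro p hp
    have hk : (G p * (F p)⁻¹)⁻¹ * pu (fun q => G q * (F q)⁻¹) p
        = F p * ((G p)⁻¹ * pu G p - (F p)⁻¹ * pu F p) * (F p)⁻¹ :=
      key F G p (1, 0) (hFd p hp) (hGd p hp) (hFud p hp) (hGud p hp)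
    have hgu := hGu p hp
    have hfu := hFu p hp
    simp only [pu] at hgu hfu hk ⊢
    rw [hk, hgu, hfu]
    have hc : (u0 p • e3 + μ • (p1 p • e1 + p2 p • e2)) - (u0 p • e3 + (p1 p • e1 + p2 p • e2))
        = (μ - 1) • (p1 p • e1 + p2 p • e2) := by module
    rw [hc, mul_smul_comm, smul_mul_assoc]
  have part2 : ∀ p ∈ D, (G p * (F p)⁻¹)⁻¹ * pv (fun q => G q * (F q)⁻¹) p
      = (μ⁻¹ - 1) • (F p * (q1 p • e1 + q2 p • e2) * (F p)⁻¹) := by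
    intro p hp
    have hk : (G p * (F p)⁻¹)⁻¹ * pv (fun q => G q * (F q)⁻¹) p
        = F p * ((G p)⁻¹ * pv G p - (F p)⁻¹ * pv F p) * (F p)⁻¹ :=
      key F G p (0, 1) (hFd p hp) (hGd p hp) (hFud p hp) (hGud p hp)
    have hgv := hGv p hp
    have hfv := hFv p hp
    simp only [pv] at hgv hfv hk ⊢
    rw [hk, hgv, hfv]
    have hc : (v0 p • e3 + μ⁻¹ • (q1 p • e1 + q2 p • e2)) - (v0 p • e3 + (q1 p • e1 + q2 p • e2))
        = (μ⁻¹ - 1) • (q1 p • e1 + q2 p • e2) := by module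
    rw [hc, mul_smul_comm, smul_mul_assoc]
  refine ⟨part1, part2, ?_⟩
  intro p hp hli
  set B1 := p1 p • e1 + p2 p • e2 with hB1
  set B2 := q1 p • e1 + q2 p • e2 with hB2
  have hAdet : IsUnit (G p * (F p)⁻¹).det := by
    rw [Matrix.det_mul, Matrix.det_nonsing_inv, hFdet p hp, hGdet p hp]
    simp
  -- recover pu f and pv f from parts 1 and 2
  have hrec : ∀ X : M2, (G p * (F p)⁻¹)⁻¹ * X = X → True := fun _ _ => trivial
  have hpu : pu (fun q => G q * (F q)⁻¹) p
      = (μ - 1) • (G p * B1 * (F p)⁻¹) := by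
    have h1 := part1 p hp
    have : pu (fun q => G q * (F q)⁻¹) p
        = (G p * (F p)⁻¹) * ((G p * (F p)⁻¹)⁻¹ * pu (fun q => G q * (F q)⁻¹) p) := by
      rw [← mul_assoc, Matrix.mul_nonsing_inv _ hAdet, one_mul]
    rw [this, h1, mul_smul_comm]
    congr 1
    calc G p * (F p)⁻¹ * (F p * B1 * (F p)⁻¹)
        = G p * ((F p)⁻¹ * F p) * (B1 * (F p)⁻¹) := by noncomm_ring
      _ = G p * B1 * (F p)⁻¹ := by
          rw [Matrix.nonsing_inv_mul _ (hFud p hp), mul_one, mul_assoc]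
  have hpv : pv (fun q => G q * (F q)⁻¹) p
      = (μ⁻¹ - 1) • (G p * B2 * (F p)⁻¹) := by
    have h2 := part2 p hp
    have : pv (fun q => G q * (F q)⁻¹) p
        = (G p * (F p)⁻¹) * ((G p * (F p)⁻¹)⁻¹ * pv (fun q => G q * (F q)⁻¹) p) := by
      rw [← mul_assoc, Matrix.mul_nonsing_inv _ hAdet, one_mul]
    rw [this, h2, mul_smul_comm]
    congr 1
    calc G p * (F p)⁻¹ * (F p * B2 * (F p)⁻¹)
        = G p * ((F p)⁻¹ * F p) * (B2 * (F p)⁻¹) := by noncomm_ring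
      _ = G p * B2 * (F p)⁻¹ := by
          rw [Matrix.nonsing_inv_mul _ (hFud p hp), mul_one, mul_assoc]
  rw [LinearIndependent.pair_iff] at hli ⊢
  intro s t hst
  have hcomb : G p * ((s * (μ - 1)) • B1 + (t * (μ⁻¹ - 1)) • B2) * (F p)⁻¹ = 0 := by
    have : G p * ((s * (μ - 1)) • B1 + (t * (μ⁻¹ - 1)) • B2) * (F p)⁻¹
        = s • pu (fun q => G q * (F q)⁻¹) p + t • pv (fun q => G q * (F q)⁻¹) p := by
      rw [hpu, hpv]
      simp only [smul_smul, mul_add, add_mul, mul_smul_comm, smul_mul_assoc]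
    rw [this, hst]
  have hzero : (s * (μ - 1)) • B1 + (t * (μ⁻¹ - 1)) • B2 = 0 := by
    have h := congrArg (fun X => (G p)⁻¹ * X * F p) hcomb
    simp only [mul_zero, zero_mul] at h
    rw [← mul_assoc, ← mul_assoc, Matrix.nonsing_inv_mul _ (hGud p hp), one_mul,
      mul_assoc, Matrix.nonsing_inv_mul _ (hFud p hp), mul_one] at h
    exact h
  obtain ⟨hs, ht⟩ := hli _ _ hzero
  have hμ1' : μ - 1 ≠ 0 := sub_ne_zero.mpr hμ1
  have hμ2' : μ⁻¹ - 1 ≠ 0 := sub_ne_zero.mpr (by rwa [ne_eq, inv_eq_one])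
  exact ⟨by rcases mul_eq_zero.mp hs with h | h; exact h; exact absurd h hμ1',
    by rcases mul_eq_zero.mp ht with h | h; exact h; exact absurd h hμ2'⟩
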